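/- Let q be prime. Assuming the Weil bound for Kloosterman sums, there is an absolute constant C such that Var(μ_q; B_R) = vol(B_R)/φ(q) + E with |E| ≤ C·R⁴·(log q)², for all R < 1/2. -/

import Mathlib

open Real Complex MeasureTheory

noncomputable def kloostermanS (q : ℕ) (m n : ℤ) : ℂ :=
  ∑ d ∈ (Finset.range q).filter (fun d => Nat.Coprime d q),
    Complex.exp (2 * Real.pi * Complex.I *
      (((m * d + n * (((d : ZMod q)⁻¹).val : ℤ) : ℤ) : ℂ) / q))

noncomputable def enorm2 (v : ℝ × ℝ) : ℝ := Real.sqrt (v.1 ^ 2 + v.2 ^ 2)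

noncomputable def KR (R : ℝ) (x y : ℝ × ℝ) : ℝ :=
  ∑' p : ℤ × ℤ, if enorm2 (x + ((p.1 : ℝ), (p.2 : ℝ)) - y) ≤ R then (1 : ℝ) else 0

noncomputable def muVal (q : ℕ) (R : ℝ) (x : ℝ × ℝ) : ℝ :=
  (1 / (q.totient : ℝ)) *
    ∑ d ∈ (Finset.range q).filter (fun d => Nat.Coprime d q),
      KR R ((d : ℝ) / q, ((((d : ZMod q)⁻¹).val : ℕ) : ℝ) / q) x

noncomputable def varMu (q : ℕ) (R : ℝ) : ℝ :=
  ∫ x in (Set.Ioc (0 : ℝ) 1 ×ˢ Set.Ioc (0 : ℝ) 1),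
    (muVal q R x - Real.pi * R ^ 2) ^ 2

/-! Since `R < 1/2`, `μ_q(B_R(x))` is the average over the points `P_d = (d/q, d⁻¹/q)` of the
indicators of the periodised discs `D_d` of radius `R` around them, and each `D_d` meets the unit
square in area `πR²`. Expanding the square, the variance is
`φ⁻² ∑_{d,d'} |D_d ∩ D_{d'} ∩ [0,1]²| - (πR²)²`; the diagonal gives `πR²/φ`, and an off-diagonal
term is at most `πR²` and vanishes unless `P_d`, `P_{d'}` are `2R`-close on the torus. Closeness
puts both `d - d'` and `d⁻¹ - d'⁻¹` among the at most `4Rq` nonzero residues of absolute value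
`≤ 2Rq`, and `(x, y) ↦ (x - y, x⁻¹ - y⁻¹)` is at most two-to-one on pairs of distinct units, its
fibres being `{(x, y), (-y, -x)}`. Hence there are `O(R²q²)` close pairs and the error is `O(R⁴)`,
which is `O(R⁴ (log q)²)` as `log q ≥ log 2`. -/

open Set

def intVec (p : ℤ × ℤ) : ℝ × ℝ := ((p.1 : ℝ), (p.2 : ℝ))

lemma intVec_sub (p p' : ℤ × ℤ) : intVec (p - p') = intVec p - intVec p' := by
  simp [intVec]

lemma intVec_neg (p : ℤ × ℤ) : intVec (-p) = -intVec p := by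
  simp [intVec]

lemma enorm2_eq_norm (v : ℝ × ℝ) : enorm2 v = ‖Complex.measurableEquivRealProd.symm v‖ := by
  simp [enorm2, Complex.norm_def, Complex.normSq_apply, sq]

lemma continuous_enorm2 : Continuous enorm2 := by unfold enorm2; fun_prop

lemma enorm2_neg (v : ℝ × ℝ) : enorm2 (-v) = enorm2 v := by
  simp [enorm2]

lemma enorm2_add_le (a b : ℝ × ℝ) : enorm2 (a + b) ≤ enorm2 a + enorm2 b := by
  have hadd : Complex.measurableEquivRealProd.symm (a + b) =
      Complex.measurableEquivRealProd.symm a + Complex.measurableEquivRealProd.symm b :=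
    Complex.ext (by simp) (by simp)
  simpa only [enorm2_eq_norm, hadd] using norm_add_le _ _

lemma enorm2_sub_le_add (a b x : ℝ × ℝ) : enorm2 (a - b) ≤ enorm2 (a - x) + enorm2 (b - x) := by
  rw [← enorm2_neg (b - x)]
  simpa using enorm2_add_le (a - x) (-(b - x))

lemma abs_fst_le_enorm2 (v : ℝ × ℝ) : |v.1| ≤ enorm2 v := by
  simpa [enorm2_eq_norm] using Complex.abs_re_le_norm (Complex.measurableEquivRealProd.symm v)

lemma abs_snd_le_enorm2 (v : ℝ × ℝ) : |v.2| ≤ enorm2 v := by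
  simpa [enorm2_eq_norm] using Complex.abs_im_le_norm (Complex.measurableEquivRealProd.symm v)

lemma one_le_enorm2_intVec {p : ℤ × ℤ} (hp : p ≠ 0) : 1 ≤ enorm2 (intVec p) := by
  have key : ∀ n : ℤ, n ≠ 0 → (1 : ℝ) ≤ |(n : ℝ)| := fun n hn => by
    rw [← Int.cast_abs]; exact_mod_cast Int.one_le_abs hn
  obtain h | h : p.1 ≠ 0 ∨ p.2 ≠ 0 := by
    by_contra! h; exact hp (Prod.ext h.1 h.2)
  · exact (key _ h).trans (abs_fst_le_enorm2 (intVec p))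
  · exact (key _ h).trans (abs_snd_le_enorm2 (intVec p))

def disc (c : ℝ × ℝ) (r : ℝ) : Set (ℝ × ℝ) := {x | enorm2 (c - x) ≤ r}

def periodicDisc (c : ℝ × ℝ) (r : ℝ) : Set (ℝ × ℝ) := ⋃ p : ℤ × ℤ, disc (c + intVec p) r

abbrev unitSquare : Set (ℝ × ℝ) := Ioc 0 1 ×ˢ Ioc 0 1

def unitCell (p : ℤ × ℤ) : Set (ℝ × ℝ) := Ioc (p.1 : ℝ) (p.1 + 1) ×ˢ Ioc (p.2 : ℝ) (p.2 + 1)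

def TorusClose (a b : ℝ × ℝ) (ρ : ℝ) : Prop := ∃ p : ℤ × ℤ, enorm2 (a - b + intVec p) ≤ ρ

lemma measurableSet_disc (c : ℝ × ℝ) (r : ℝ) : MeasurableSet (disc c r) :=
  (isClosed_le (continuous_enorm2.comp (continuous_const.sub continuous_id))
    continuous_const).measurableSet

lemma measurableSet_periodicDisc (c : ℝ × ℝ) (r : ℝ) : MeasurableSet (periodicDisc c r) :=
  .iUnion fun _ => measurableSet_disc _ _

lemma volume_disc (c : ℝ × ℝ) {r : ℝ} (hr : 0 ≤ r) :
    volume (disc c r) = ENNReal.ofReal (π * r ^ 2) := by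
  have hpre : Complex.measurableEquivRealProd ⁻¹' disc c r
      = Metric.closedBall (Complex.measurableEquivRealProd.symm c) r := by
    ext z
    have : Complex.measurableEquivRealProd.symm (c - Complex.measurableEquivRealProd z)
        = Complex.measurableEquivRealProd.symm c - z := Complex.ext (by simp) (by simp)
    rw [Metric.mem_closedBall, dist_comm, dist_eq_norm, ← this, ← enorm2_eq_norm]
    rfl
  rw [← Complex.volume_preserving_equiv_real_prod.measure_preimage
    (measurableSet_disc c r).nullMeasurableSet, hpre, Complex.volume_closedBall,
    ← ENNReal.ofReal_pow hr, ← ENNReal.ofReal_coe_nnreal, NNReal.coe_real_pi,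
    ← ENNReal.ofReal_mul (by positivity), mul_comm]

lemma enorm2_sub_add_intVec_le {a b x : ℝ × ℝ} {r : ℝ} {p p' : ℤ × ℤ}
    (ha : x ∈ disc (a + intVec p) r) (hb : x ∈ disc (b + intVec p') r) :
    enorm2 (a - b + intVec (p - p')) ≤ 2 * r := by
  have := enorm2_sub_le_add (a + intVec p) (b + intVec p') x
  rw [intVec_sub, show a - b + (intVec p - intVec p') = a + intVec p - (b + intVec p') by abel]
  exact this.trans (by linarith [show enorm2 _ ≤ r from ha, show enorm2 _ ≤ r from hb])

lemma eq_of_mem_disc_add_intVec {c x : ℝ × ℝ} {r : ℝ} (hr : r < 1 / 2) {p p' : ℤ × ℤ}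
    (h : x ∈ disc (c + intVec p) r) (h' : x ∈ disc (c + intVec p') r) : p = p' := by
  by_contra hne
  have h1 := one_le_enorm2_intVec (sub_ne_zero.2 hne)
  have h2 := enorm2_sub_add_intVec_le h h'
  rw [sub_self, zero_add] at h2
  linarith

lemma periodicDisc_inter_eq_empty {a b : ℝ × ℝ} {r : ℝ} (h : ¬TorusClose a b (2 * r)) :
    periodicDisc a r ∩ periodicDisc b r = ∅ := by
  refine eq_empty_of_forall_notMem fun x ⟨ha, hb⟩ => h ?_
  obtain ⟨p, hp⟩ := mem_iUnion.1 ha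
  obtain ⟨p', hp'⟩ := mem_iUnion.1 hb
  exact ⟨p - p', enorm2_sub_add_intVec_le hp hp'⟩

lemma KR_eq_indicator {r : ℝ} (hr : r < 1 / 2) (c x : ℝ × ℝ) :
    KR r c x = (periodicDisc c r).indicator 1 x := by
  by_cases hx : x ∈ periodicDisc c r
  · obtain ⟨p₀, hp₀⟩ := mem_iUnion.1 hx
    rw [indicator_of_mem hx, KR, tsum_eq_single p₀ fun p hp => if_neg fun h => hp ?_]
    · exact if_pos hp₀
    · exact eq_of_mem_disc_add_intVec hr h hp₀
  · rw [indicator_of_notMem hx, KR]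
    exact (tsum_congr fun p => if_neg fun h => hx (mem_iUnion.2 ⟨p, h⟩)).trans tsum_zero

lemma mem_unitCell_iff {p : ℤ × ℤ} {x : ℝ × ℝ} : x ∈ unitCell p ↔ x - intVec p ∈ unitSquare := by
  simp only [unitCell, intVec, mem_prod, mem_Ioc, Prod.fst_sub, Prod.snd_sub, sub_pos,
    sub_le_iff_le_add, add_comm (1 : ℝ)]

lemma measurableSet_unitCell (p : ℤ × ℤ) : MeasurableSet (unitCell p) :=
  measurableSet_Ioc.prod measurableSet_Ioc

lemma iUnion_unitCell : ⋃ p, unitCell p = univ := by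
  simp only [unitCell]
  rw [iUnion_prod (fun m : ℤ => Ioc (m : ℝ) (m + 1)) (fun m : ℤ => Ioc (m : ℝ) (m + 1)),
    iUnion_Ioc_intCast, univ_prod_univ]

lemma pairwise_disjoint_unitCell : Pairwise (Function.onFun Disjoint unitCell) := by
  intro p p' hne
  simp only [Function.onFun, unitCell, disjoint_prod]
  obtain h | h : p.1 ≠ p'.1 ∨ p.2 ≠ p'.2 := by
    by_contra! h; exact hne (Prod.ext h.1 h.2)
  · exact .inl (pairwise_disjoint_Ioc_intCast (α := ℝ) h)
  · exact .inr (pairwise_disjoint_Ioc_intCast (α := ℝ) h)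

lemma tsum_volume_inter_unitCell {S : Set (ℝ × ℝ)} (hS : MeasurableSet S) :
    ∑' p, volume (S ∩ unitCell p) = volume S := by
  rw [← measure_iUnion (fun p p' h => (pairwise_disjoint_unitCell h).mono inter_subset_right
    inter_subset_right) fun p => hS.inter (measurableSet_unitCell p), ← inter_iUnion,
    iUnion_unitCell, inter_univ]

lemma disc_add_intVec_inter_unitSquare (c : ℝ × ℝ) (r : ℝ) (p : ℤ × ℤ) :
    disc (c + intVec p) r ∩ unitSquare = (· + intVec (-p)) ⁻¹' (disc c r ∩ unitCell (-p)) := by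
  ext x
  have hc : c - (x - intVec p) = c + intVec p - x := by abel
  simp only [mem_inter_iff, mem_preimage, mem_unitCell_iff, intVec_neg, sub_neg_eq_add,
    ← sub_eq_add_neg, sub_add_cancel]
  exact and_congr_left' (show enorm2 _ ≤ r ↔ enorm2 _ ≤ r by rw [hc])

-- The pieces `disc (c + p) r ∩ unitSquare`, translated by `-p`, tile `disc c r`.
lemma volume_periodicDisc_inter_unitSquare (c : ℝ × ℝ) {r : ℝ} (hr0 : 0 ≤ r) (hr : r < 1 / 2) :
    volume (periodicDisc c r ∩ unitSquare) = ENNReal.ofReal (π * r ^ 2) := by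
  rw [periodicDisc, iUnion_inter, measure_iUnion]
  · simp_rw [disc_add_intVec_inter_unitSquare, measure_preimage_add_right]
    rw [tsum_comp_neg fun p => volume (disc c r ∩ unitCell p),
      tsum_volume_inter_unitCell (measurableSet_disc c r), volume_disc c hr0]
  · refine fun p p' hne => Disjoint.mono inter_subset_left inter_subset_left ?_
    exact disjoint_left.2 fun x h h' => hne (eq_of_mem_disc_add_intVec hr h h')
  · exact fun p => (measurableSet_disc _ _).inter (measurableSet_Ioc.prod measurableSet_Ioc)

lemma volume_unitSquare : volume unitSquare = 1 := by
  rw [Measure.volume_eq_prod, Measure.prod_prod, Real.volume_Ioc]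
  norm_num

instance : IsFiniteMeasure (volume.restrict unitSquare) :=
  isFiniteMeasure_restrict.2 (by simp [volume_unitSquare])

lemma volumeReal_periodicDisc_inter_unitSquare (c : ℝ × ℝ) {r : ℝ} (hr0 : 0 ≤ r)
    (hr : r < 1 / 2) : volume.real (periodicDisc c r ∩ unitSquare) = π * r ^ 2 := by
  rw [measureReal_def, volume_periodicDisc_inter_unitSquare c hr0 hr,
    ENNReal.toReal_ofReal (by positivity)]

lemma setIntegral_unitSquare_indicator_one {S : Set (ℝ × ℝ)} (hS : MeasurableSet S) :
    ∫ x in unitSquare, S.indicator 1 x = volume.real (S ∩ unitSquare) := by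
  rw [integral_indicator_one hS, measureReal_restrict_apply hS]

noncomputable def overlap (a b : ℝ × ℝ) (r : ℝ) : ℝ :=
  volume.real (periodicDisc a r ∩ periodicDisc b r ∩ unitSquare)

lemma overlap_self (c : ℝ × ℝ) {r : ℝ} (hr0 : 0 ≤ r) (hr : r < 1 / 2) :
    overlap c c r = π * r ^ 2 := by
  rw [overlap, inter_self, volumeReal_periodicDisc_inter_unitSquare c hr0 hr]

lemma overlap_le (a b : ℝ × ℝ) {r : ℝ} (hr0 : 0 ≤ r) (hr : r < 1 / 2) :
    overlap a b r ≤ π * r ^ 2 := by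
  rw [← volumeReal_periodicDisc_inter_unitSquare a hr0 hr]
  exact measureReal_mono (inter_subset_inter_left _ inter_subset_left)
    (measure_ne_top_of_subset inter_subset_right (by simp [volume_unitSquare]))

lemma overlap_eq_zero {a b : ℝ × ℝ} {r : ℝ} (h : ¬TorusClose a b (2 * r)) :
    overlap a b r = 0 := by
  rw [overlap, periodicDisc_inter_eq_empty h, empty_inter, measureReal_empty]

section Variance

open Finset

variable {ι : Type*} (s : Finset ι) (c : ι → ℝ × ℝ) (r : ℝ)

open Classical in
noncomputable def closePairs : Finset (ι × ι) :=
  {ij ∈ s.offDiag | TorusClose (c ij.1) (c ij.2) (2 * r)}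

variable {s r}

lemma setIntegral_sq_average_sub (hs : s.Nonempty) (hr0 : 0 ≤ r) (hr : r < 1 / 2) :
    ∫ x in unitSquare,
        ((1 / (#s : ℝ)) * ∑ i ∈ s, (periodicDisc (c i) r).indicator 1 x - π * r ^ 2) ^ 2
      = (1 / (#s : ℝ)) ^ 2 * ∑ i ∈ s, ∑ j ∈ s, overlap (c i) (c j) r - (π * r ^ 2) ^ 2 := by
  set v := π * r ^ 2
  set n : ℝ := (#s : ℝ)
  have hn : n ≠ 0 := by simp [n, hs.ne_empty]
  have hT i : MeasurableSet (periodicDisc (c i) r) := measurableSet_periodicDisc _ _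
  have hint {S : Set (ℝ × ℝ)} (hS : MeasurableSet S) :
      Integrable (S.indicator (1 : ℝ × ℝ → ℝ)) (volume.restrict unitSquare) :=
    (integrable_const (1 : ℝ)).indicator hS
  have hpoint (x : ℝ × ℝ) :
      ((1 / n) * ∑ i ∈ s, (periodicDisc (c i) r).indicator 1 x - v) ^ 2
        = (1 / n) ^ 2 * ∑ i ∈ s, ∑ j ∈ s,
            (periodicDisc (c i) r ∩ periodicDisc (c j) r).indicator 1 x
          - 2 * v / n * ∑ i ∈ s, (periodicDisc (c i) r).indicator 1 x + v ^ 2 := by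
    simp only [inter_indicator_one, Pi.mul_apply, ← sum_mul_sum]
    ring
  have hsq : ∫ x in unitSquare, ∑ i ∈ s, ∑ j ∈ s,
      (periodicDisc (c i) r ∩ periodicDisc (c j) r).indicator (1 : ℝ × ℝ → ℝ) x
        = ∑ i ∈ s, ∑ j ∈ s, overlap (c i) (c j) r := by
    rw [integral_finsetSum _ fun i _ => integrable_finsetSum _ fun j _ =>
      hint ((hT i).inter (hT j))]
    refine sum_congr rfl fun i _ => ?_
    rw [integral_finsetSum _ fun j _ => hint ((hT i).inter (hT j))]
    exact sum_congr rfl fun j _ => setIntegral_unitSquare_indicator_one ((hT i).inter (hT j))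
  have hlin : ∫ x in unitSquare, ∑ i ∈ s, (periodicDisc (c i) r).indicator (1 : ℝ × ℝ → ℝ) x
      = n * v := by
    rw [integral_finsetSum _ fun i _ => hint (hT i)]
    simp only [setIntegral_unitSquare_indicator_one (hT _),
      volumeReal_periodicDisc_inter_unitSquare _ hr0 hr, sum_const, nsmul_eq_mul, n, v]
  have hA : Integrable (fun x => (1 / n) ^ 2 * ∑ i ∈ s, ∑ j ∈ s,
      (periodicDisc (c i) r ∩ periodicDisc (c j) r).indicator (1 : ℝ × ℝ → ℝ) x)
      (volume.restrict unitSquare) :=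
    (integrable_finsetSum _ fun i _ => integrable_finsetSum _ fun j _ =>
      hint ((hT i).inter (hT j))).const_mul _
  have hB : Integrable (fun x => 2 * v / n * ∑ i ∈ s,
      (periodicDisc (c i) r).indicator (1 : ℝ × ℝ → ℝ) x) (volume.restrict unitSquare) :=
    (integrable_finsetSum _ fun i _ => hint (hT i)).const_mul _
  simp_rw [hpoint]
  rw [integral_add (hA.sub' hB) (integrable_const _), integral_sub hA hB, integral_const_mul,
    integral_const_mul, hsq, hlin, setIntegral_const, measureReal_def, volume_unitSquare,
    ENNReal.toReal_one, one_smul]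
  field_simp
  ring

lemma sum_overlap_offDiag_le (hr0 : 0 ≤ r) (hr : r < 1 / 2) :
    ∑ ij ∈ s.offDiag, overlap (c ij.1) (c ij.2) r ≤ #(closePairs s c r) * (π * r ^ 2) := by
  classical
  rw [closePairs, ← sum_filter_of_ne fun ij _ h => by_contra fun hc => h (overlap_eq_zero hc),
    ← nsmul_eq_mul]
  exact sum_le_card_nsmul _ _ _ fun ij _ => overlap_le _ _ hr0 hr

lemma abs_setIntegral_sq_average_sub_le (hs : s.Nonempty) (hr0 : 0 ≤ r) (hr : r < 1 / 2) :
    |(∫ x in unitSquare,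
        ((1 / (#s : ℝ)) * ∑ i ∈ s, (periodicDisc (c i) r).indicator 1 x - π * r ^ 2) ^ 2)
      - π * r ^ 2 / #s| ≤ (π * r ^ 2) ^ 2 + π * r ^ 2 * #(closePairs s c r) / (#s : ℝ) ^ 2 := by
  rw [setIntegral_sq_average_sub c hs hr0 hr]
  classical
  set v := π * r ^ 2
  set n : ℝ := (#s : ℝ)
  have hn : 0 < n := by simp [n, hs.card_pos]
  set off := ∑ ij ∈ s.offDiag, overlap (c ij.1) (c ij.2) r
  have hsplit : ∑ i ∈ s, ∑ j ∈ s, overlap (c i) (c j) r = n * v + off := by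
    rw [← sum_product' (f := fun i j => overlap (c i) (c j) r), ← diag_union_offDiag,
      sum_union (disjoint_diag_offDiag s), sum_diag]
    simp only [overlap_self _ hr0 hr, sum_const, nsmul_eq_mul, n, v, off]
  have hoff0 : 0 ≤ off := sum_nonneg fun _ _ => measureReal_nonneg
  have hoff : off / n ^ 2 ≤ v * #(closePairs s c r) / n ^ 2 := by
    rw [mul_comm v]
    exact div_le_div_of_nonneg_right (sum_overlap_offDiag_le c hr0 hr) (by positivity)
  rw [hsplit,
    show (1 / n) ^ 2 * (n * v + off) - v ^ 2 - v / n = off / n ^ 2 - v ^ 2 by field_simp; ring,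
    abs_sub_le_iff]
  constructor
  · nlinarith [sq_nonneg v]
  · have : 0 ≤ off / n ^ 2 := by positivity
    have : 0 ≤ v * #(closePairs s c r) / n ^ 2 := by positivity
    linarith

end Variance

section ModularHyperbola

open Finset

noncomputable def shortResidues (q : ℕ) (ρ : ℝ) : Finset (ZMod q) :=
  ((Finset.Icc (-⌊ρ⌋) ⌊ρ⌋).erase 0).image (↑)

lemma intCast_mem_shortResidues {q : ℕ} {ρ : ℝ} {s : ℤ} (hs : s ≠ 0) (h : |(s : ℝ)| ≤ ρ) :
    (s : ZMod q) ∈ shortResidues q ρ := by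
  rw [abs_le] at h
  refine mem_image.2 ⟨s, mem_erase.2 ⟨hs, mem_Icc.2 ⟨?_, Int.le_floor.2 h.2⟩⟩, rfl⟩
  rw [neg_le, Int.le_floor, Int.cast_neg]
  linarith

lemma card_shortResidues_le (q : ℕ) {ρ : ℝ} (hρ : 0 ≤ ρ) : (#(shortResidues q ρ) : ℝ) ≤ 2 * ρ := by
  have hcard : #((Finset.Icc (-⌊ρ⌋) ⌊ρ⌋).erase 0) = 2 * ⌊ρ⌋₊ := by
    rw [card_erase_of_mem (mem_Icc.2 ⟨by simp [Int.floor_nonneg.2 hρ], Int.floor_nonneg.2 hρ⟩),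
      Int.card_Icc, ← Int.natCast_floor_eq_floor hρ]
    omega
  calc (#(shortResidues q ρ) : ℝ) ≤ (2 * ⌊ρ⌋₊ : ℕ) := by
        exact_mod_cast hcard ▸ card_image_le
    _ ≤ 2 * ρ := by push_cast; linarith [Nat.floor_le hρ]

variable {F : Type*} [Field F]

lemma eq_or_eq_neg_swap_of_sub_eq_of_inv_sub_eq {x y x' y' : F} (hx : x ≠ 0) (hy : y ≠ 0)
    (hxy : x ≠ y) (hx' : x' ≠ 0) (hy' : y' ≠ 0) (hsub : x' - y' = x - y)
    (hinv : x'⁻¹ - y'⁻¹ = x⁻¹ - y⁻¹) : (x', y') = (x, y) ∨ (x', y') = (-y, -x) := by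
  have hprod : x' * y' = x * y := by
    field_simp at hinv
    exact mul_left_cancel₀ (sub_ne_zero.2 hxy.symm) (by linear_combination -hinv - x * y * hsub)
  have hy'' : y' = x' - x + y := by linear_combination -hsub
  have hquad : (x' - x) * (x' + y) = 0 := by linear_combination hprod - x' * hy''
  rcases mul_eq_zero.1 hquad with h | h
  · exact .inl (Prod.ext (by linear_combination h) (by linear_combination hy'' + h))
  · exact .inr (Prod.ext (by linear_combination h) (by linear_combination hy'' + h))

lemma card_filter_offDiag_sub_inv_sub_mem_le [DecidableEq F] (S A B : Finset F) (hS : 0 ∉ S) :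
    #{xy ∈ S.offDiag | xy.1 - xy.2 ∈ A ∧ xy.1⁻¹ - xy.2⁻¹ ∈ B} ≤ 2 * (#A * #B) := by
  set P := {xy ∈ S.offDiag | xy.1 - xy.2 ∈ A ∧ xy.1⁻¹ - xy.2⁻¹ ∈ B}
  have hne {x : F} (hx : x ∈ S) : x ≠ 0 := fun h => hS (h ▸ hx)
  rw [← card_product]
  refine card_le_mul_card_image_of_maps_to (s := P) (t := A ×ˢ B)
    (f := fun xy : F × F => (xy.1 - xy.2, xy.1⁻¹ - xy.2⁻¹))
    (fun xy hxy => mem_product.2 (mem_filter.1 hxy).2) 2 fun ab _ => ?_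
  obtain ⟨⟨x, y⟩, hxy⟩ | hempty :=
    ({xy ∈ P | (xy.1 - xy.2, xy.1⁻¹ - xy.2⁻¹) = ab}).eq_empty_or_nonempty.symm
  · obtain ⟨hP, rfl⟩ := mem_filter.1 hxy
    obtain ⟨hx, hy, hxy⟩ := mem_offDiag.1 (mem_filter.1 hP).1
    refine (card_le_card ?_).trans (card_insert_le (x, y) {(-y, -x)})
    rintro ⟨x', y'⟩ hxy'
    obtain ⟨hP', heq⟩ := mem_filter.1 hxy'
    obtain ⟨hx', hy', -⟩ := mem_offDiag.1 (mem_filter.1 hP').1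
    obtain ⟨hsub, hinv⟩ := Prod.ext_iff.1 heq
    simpa only [Finset.mem_insert, Finset.mem_singleton] using
      eq_or_eq_neg_swap_of_sub_eq_of_inv_sub_eq (hne hx) (hne hy) hxy (hne hx') (hne hy') hsub hinv
  · simp [hempty]

end ModularHyperbola

section HyperbolaPoints

open Finset

def coprimeResidues (q : ℕ) : Finset ℕ := {d ∈ range q | d.Coprime q}

noncomputable def hyperbolaPoint (q d : ℕ) : ℝ × ℝ :=
  ((d : ℝ) / q, ((((d : ZMod q)⁻¹).val : ℕ) : ℝ) / q)

lemma card_coprimeResidues (q : ℕ) : #(coprimeResidues q) = q.totient := by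
  simp only [coprimeResidues, Nat.totient, Nat.coprime_comm]

lemma varMu_eq_setIntegral {q : ℕ} {R : ℝ} (hR : R < 1 / 2) :
    varMu q R = ∫ x in unitSquare, ((1 / (#(coprimeResidues q) : ℝ)) * ∑ d ∈ coprimeResidues q,
      (periodicDisc (hyperbolaPoint q d) R).indicator 1 x - π * R ^ 2) ^ 2 := by
  simp only [varMu, muVal, KR_eq_indicator hR, card_coprimeResidues]
  rfl

lemma natCast_sub_mem_shortResidues {q : ℕ} (hq : 0 < q) {a b : ℕ} (hab : (a : ZMod q) ≠ b)
    {p : ℤ} {ρ : ℝ} (h : |(a : ℝ) / q - b / q + p| ≤ ρ) :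
    (a - b : ZMod q) ∈ shortResidues q (ρ * q) := by
  have hq' : (0 : ℝ) < q := by exact_mod_cast hq
  have hcast : (((a - b + p * q : ℤ)) : ZMod q) = a - b := by
    push_cast
    rw [ZMod.natCast_self, mul_zero, add_zero]
  rw [← hcast]
  refine intCast_mem_shortResidues (fun h0 => hab ?_) ?_
  · rw [← sub_eq_zero, ← hcast, h0, Int.cast_zero]
  · have : ((a - b + p * q : ℤ) : ℝ) = q * ((a : ℝ) / q - b / q + p) := by
      push_cast; field_simp
    rw [this, abs_mul, abs_of_pos hq', mul_comm]
    exact mul_le_mul_of_nonneg_right h hq'.le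

lemma card_closePairs_hyperbolaPoint_le {q : ℕ} (hq : q.Prime) {r : ℝ} (hr0 : 0 ≤ r) :
    (#(closePairs (coprimeResidues q) (hyperbolaPoint q) r) : ℝ) ≤ 32 * r ^ 2 * q ^ 2 := by
  classical
  have := Fact.mk hq
  set S := (coprimeResidues q).image (Nat.cast : ℕ → ZMod q)
  set A := shortResidues q (2 * r * q)
  have hlt {d : ℕ} (hd : d ∈ coprimeResidues q) : d < q := mem_range.1 (mem_filter.1 hd).1
  have hinj : Set.InjOn (Nat.cast : ℕ → ZMod q) (coprimeResidues q) := fun d hd d' hd' h => by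
    rwa [ZMod.natCast_eq_natCast_iff', Nat.mod_eq_of_lt (hlt hd), Nat.mod_eq_of_lt (hlt hd')] at h
  have hS : (0 : ZMod q) ∉ S := by
    rintro hS0
    obtain ⟨d, hd, h0⟩ := Finset.mem_image.1 hS0
    obtain ⟨hdq, hcop⟩ := mem_filter.1 hd
    obtain rfl := Nat.eq_zero_of_dvd_of_lt ((ZMod.natCast_eq_zero_iff d q).1 h0) (mem_range.1 hdq)
    exact hq.one_lt.ne' (Nat.coprime_zero_left q |>.1 hcop)
  have hmaps : ∀ dd ∈ closePairs (coprimeResidues q) (hyperbolaPoint q) r,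
      Prod.map (Nat.cast : ℕ → ZMod q) Nat.cast dd ∈
        {xy ∈ S.offDiag | xy.1 - xy.2 ∈ A ∧ xy.1⁻¹ - xy.2⁻¹ ∈ A} := by
    rintro ⟨d, d'⟩ hdd
    obtain ⟨hoff, p, hp⟩ := mem_filter.1 hdd
    obtain ⟨hd, hd', hne⟩ := mem_offDiag.1 hoff
    have hne' : (d : ZMod q) ≠ d' := fun h => hne (hinj hd hd' h)
    have hinv : (((d : ZMod q)⁻¹).val : ZMod q) ≠ ((d' : ZMod q)⁻¹).val := by
      simpa only [ZMod.natCast_zmod_val, ne_eq, inv_inj] using hne'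
    refine mem_filter.2 ⟨mem_offDiag.2 ⟨mem_image_of_mem _ hd, mem_image_of_mem _ hd', hne'⟩,
      natCast_sub_mem_shortResidues hq.pos hne' ((abs_fst_le_enorm2 _).trans hp), ?_⟩
    simpa only [ZMod.natCast_zmod_val, Prod.map_fst, Prod.map_snd] using
      natCast_sub_mem_shortResidues hq.pos hinv ((abs_snd_le_enorm2 _).trans hp)
  have hA : (#A : ℝ) ≤ 4 * r * q := by
    linarith [card_shortResidues_le q (show 0 ≤ 2 * r * q by positivity)]
  have hsub : (closePairs (coprimeResidues q) (hyperbolaPoint q) r : Set (ℕ × ℕ)) ⊆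
      coprimeResidues q ×ˢ coprimeResidues q := fun dd hdd =>
    (mem_offDiag.1 (mem_filter.1 hdd).1).imp_right And.left
  have hcount := (card_le_card_of_injOn _ hmaps ((hinj.prodMap hinj).mono hsub)).trans
    (card_filter_offDiag_sub_inv_sub_mem_le S A A hS)
  calc (#(closePairs (coprimeResidues q) (hyperbolaPoint q) r) : ℝ) ≤ 2 * (#A * #A) := by
        exact_mod_cast hcount
    _ ≤ 2 * ((4 * r * q) * (4 * r * q)) := by gcongr
    _ = 32 * r ^ 2 * q ^ 2 := by ring

lemma abs_varMu_sub_le {q : ℕ} (hq : q.Prime) {R : ℝ} (hR0 : 0 < R) (hR : R < 1 / 2) :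
    |varMu q R - π * R ^ 2 / q.totient| ≤ 528 * R ^ 4 := by
  have hne : (coprimeResidues q).Nonempty :=
    ⟨1, Finset.mem_filter.2 ⟨Finset.mem_range.2 hq.one_lt, Nat.coprime_one_left q⟩⟩
  have hvar := abs_setIntegral_sq_average_sub_le (hyperbolaPoint q) hne hR0.le hR
  rw [← varMu_eq_setIntegral hR, card_coprimeResidues] at hvar
  set N : ℝ := (#(closePairs (coprimeResidues q) (hyperbolaPoint q) R) : ℝ)
  have hφ : (q : ℝ) ≤ 2 * q.totient := by
    rw [Nat.totient_prime hq, Nat.cast_sub hq.one_le, Nat.cast_one]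
    linarith [show (2 : ℝ) ≤ q by exact_mod_cast hq.two_le]
  have hφ0 : (0 : ℝ) < q.totient := by exact_mod_cast Nat.totient_pos.2 hq.pos
  have hN : N / (q.totient : ℝ) ^ 2 ≤ 128 * R ^ 2 := by
    rw [div_le_iff₀ (by positivity)]
    nlinarith [card_closePairs_hyperbolaPoint_le hq hR0.le, sq_nonneg R,
      mul_self_le_mul_self (by positivity) hφ]
  have hπ : π * R ^ 2 ≤ 4 * R ^ 2 := by nlinarith [pi_le_four, sq_nonneg R]
  calc |varMu q R - π * R ^ 2 / q.totient|
      ≤ (π * R ^ 2) ^ 2 + π * R ^ 2 * (N / (q.totient : ℝ) ^ 2) := by rwa [← mul_div_assoc]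
    _ ≤ (4 * R ^ 2) ^ 2 + 4 * R ^ 2 * (128 * R ^ 2) := by gcongr
    _ = 528 * R ^ 4 := by ring

end HyperbolaPoints

theorem variance_asymptotic_prime_general :
    ∃ C : ℝ, 0 < C ∧ ∀ q : ℕ, q.Prime → ∀ R : ℝ, 0 < R → R < 1 / 2 →
      |varMu q R - Real.pi * R ^ 2 / (q.totient : ℝ)|
        ≤ C * R ^ 4 * Real.log q ^ 2 := by
  refine ⟨2112, by norm_num, fun q hq R hR0 hR => (abs_varMu_sub_le hq hR0 hR).trans ?_⟩
  have hlog : 1 / 2 ≤ Real.log q :=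
    le_trans (by linarith [Real.log_two_gt_d9])
      (Real.log_le_log two_pos (by exact_mod_cast hq.two_le))
  nlinarith [pow_pos hR0 4, mul_self_le_mul_self (by norm_num) hlog]

theorem variance_asymptotic_prime
    (hWeil : ∀ q : ℕ, 0 < q → ∀ m n : ℤ, ¬(m = 0 ∧ n = 0) →
      ‖kloostermanS q m n‖ ≤ (q.divisors.card : ℝ) *
        Real.sqrt ((Int.gcd (Int.gcd m n) (q : ℤ) : ℝ) * q)) :
    ∃ C : ℝ, 0 < C ∧ ∀ q : ℕ, q.Prime → ∀ R : ℝ, 0 < R → R < 1 / 2 →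
      |varMu q R - Real.pi * R ^ 2 / (q.totient : ℝ)|
        ≤ C * R ^ 4 * Real.log q ^ 2 :=
  variance_asymptotic_prime_general
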